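/- A finite-dimensional nilpotent Leibniz algebra is null-filiform if and only if it is generated (as an algebra) by a single element. -/
import Mathlib


/-- A (right) Leibniz algebra over a field `F`. -/
structure LeibnizAlgebra (F : Type*) [Field F] (L : Type*) [AddCommGroup L] [Module F L] where
  bracket : L →ₗ[F] L →ₗ[F] L
  leibniz : ∀ x y z : L,
    bracket x (bracket y z) = bracket (bracket x y) z - bracket (bracket x z) y

namespace LeibnizAlgebra

variable {F : Type*} [Field F] {L : Type*} [AddCommGroup L] [Module F L]

/-- The subspace spanned by all brackets `[a,b]` with `a ∈ I`, `b ∈ J`. -/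
def bracketSub (A : LeibnizAlgebra F L) (I J : Submodule F L) : Submodule F L :=
  Submodule.span F {z : L | ∃ a ∈ I, ∃ b ∈ J, z = A.bracket a b}

/-- A (two-sided) ideal of a Leibniz algebra. -/
def IsIdeal (A : LeibnizAlgebra F L) (I : Submodule F L) : Prop :=
  ∀ x a : L, a ∈ I → A.bracket x a ∈ I ∧ A.bracket a x ∈ I

/-- `lcsPow A I k` is `I^{k+1}`, where `I^1 = I` and `I^{k+1} = [I^k, I]`. -/
def lcsPow (A : LeibnizAlgebra F L) (I : Submodule F L) : ℕ → Submodule F L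
  | 0 => I
  | k + 1 => A.bracketSub (A.lcsPow I k) I

/-- `derPow A I s` is `I^{[s+1]}`, where `I^{[1]} = I` and `I^{[s+1]} = [I^{[s]}, I^{[s]}]`. -/
def derPow (A : LeibnizAlgebra F L) (I : Submodule F L) : ℕ → Submodule F L
  | 0 => I
  | s + 1 => A.bracketSub (A.derPow I s) (A.derPow I s)

end LeibnizAlgebra

namespace LeibnizAlgebra

variable {F : Type*} [Field F] {L : Type*} [AddCommGroup L] [Module F L]
  (A : LeibnizAlgebra F L)

lemma bracket_mem_bracketSub {I J : Submodule F L} {a b : L} (ha : a ∈ I) (hb : b ∈ J) :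
    A.bracket a b ∈ A.bracketSub I J :=
  Submodule.subset_span ⟨a, ha, b, hb, rfl⟩

lemma bracketSub_le {I J K : Submodule F L}
    (h : ∀ a ∈ I, ∀ b ∈ J, A.bracket a b ∈ K) : A.bracketSub I J ≤ K := by
  rw [bracketSub, Submodule.span_le]
  rintro z ⟨a, ha, b, hb, rfl⟩
  exact h a ha b hb

lemma bracketSub_mono {I I' J J' : Submodule F L} (hI : I ≤ I') (hJ : J ≤ J') :
    A.bracketSub I J ≤ A.bracketSub I' J' :=
  A.bracketSub_le fun a ha b hb => A.bracket_mem_bracketSub (hI ha) (hJ hb)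

lemma lcsPow_succ_le (k : ℕ) : A.lcsPow ⊤ (k + 1) ≤ A.lcsPow ⊤ k := by
  induction k with
  | zero => exact le_top
  | succ k ih => exact A.bracketSub_mono ih le_rfl

lemma lcsPow_antitone {k m : ℕ} (h : k ≤ m) : A.lcsPow ⊤ m ≤ A.lcsPow ⊤ k := by
  induction m with
  | zero => simp_all
  | succ m ih =>
    rcases Nat.lt_or_ge k (m + 1) with h' | h'
    · exact (A.lcsPow_succ_le m).trans (ih (Nat.lt_succ_iff.mp h'))
    · exact le_of_eq (by rw [Nat.le_antisymm h h'])

lemma bracketSub_lcsPow_le : ∀ t s : ℕ,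
    A.bracketSub (A.lcsPow ⊤ s) (A.lcsPow ⊤ t) ≤ A.lcsPow ⊤ (s + t + 1) := by
  intro t
  induction t with
  | zero => intro s; exact le_of_eq rfl
  | succ t ih =>
    intro s
    apply A.bracketSub_le
    intro a ha b hb
    have key : A.lcsPow ⊤ (t + 1) ≤
        Submodule.comap (A.bracket a) (A.lcsPow ⊤ (s + (t + 1) + 1)) := by
      apply A.bracketSub_le
      intro c hc d _
      simp only [Submodule.mem_comap]
      rw [A.leibniz a c d]
      apply sub_mem
      · have h1 : A.bracket a c ∈ A.lcsPow ⊤ (s + t + 1) :=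
          ih s (A.bracket_mem_bracketSub ha hc)
        have : A.bracket (A.bracket a c) d ∈ A.lcsPow ⊤ (s + t + 2) :=
          A.bracket_mem_bracketSub h1 Submodule.mem_top
        simpa [Nat.add_assoc, Nat.add_comm, Nat.add_left_comm] using this
      · have h1 : A.bracket a d ∈ A.lcsPow ⊤ (s + 1) :=
          A.bracket_mem_bracketSub ha Submodule.mem_top
        have : A.bracket (A.bracket a d) c ∈ A.lcsPow ⊤ (s + 1 + t + 1) :=
          ih (s + 1) (A.bracket_mem_bracketSub h1 hc)
        have he : s + 1 + t + 1 = s + (t + 1) + 1 := by omega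
        rwa [he] at this
    exact key hb

lemma subalg_sup_lcsPow (S : Submodule F L)
    (hS : ∀ a b : L, a ∈ S → b ∈ S → A.bracket a b ∈ S)
    (h1 : S ⊔ A.lcsPow ⊤ 1 = ⊤) : ∀ k : ℕ, S ⊔ A.lcsPow ⊤ (k + 1) = ⊤ := by
  intro k
  induction k with
  | zero => exact h1
  | succ k ih =>
    have step : A.lcsPow ⊤ (k + 1) ≤ S ⊔ A.lcsPow ⊤ (k + 2) := by
      show A.bracketSub (A.lcsPow ⊤ k) ⊤ ≤ _
      apply A.bracketSub_le
      intro a _ b _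
      have ha' : a ∈ S ⊔ A.lcsPow ⊤ (k + 1) := ih.ge Submodule.mem_top
      have hb' : b ∈ S ⊔ A.lcsPow ⊤ (k + 1) := ih.ge Submodule.mem_top
      obtain ⟨s, hs, u, hu, rfl⟩ := Submodule.mem_sup.mp ha'
      obtain ⟨s', hs', u', hu', rfl⟩ := Submodule.mem_sup.mp hb'
      have expand : A.bracket (s + u) (s' + u') =
          A.bracket s s' + A.bracket s u' + (A.bracket u s' + A.bracket u u') := by
        simp only [map_add, LinearMap.add_apply]
        abel
      rw [expand]
      apply add_mem
      · apply add_mem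
        · exact Submodule.mem_sup_left (hS _ _ hs hs')
        · apply Submodule.mem_sup_right
          have : A.bracket s u' ∈ A.bracketSub (A.lcsPow ⊤ 0) (A.lcsPow ⊤ (k + 1)) :=
            A.bracket_mem_bracketSub Submodule.mem_top hu'
          have h2 := A.bracketSub_lcsPow_le (k + 1) 0 this
          simpa using h2
      · apply Submodule.mem_sup_right
        apply add_mem
        · exact A.bracket_mem_bracketSub hu Submodule.mem_top
        · exact A.bracketSub_mono le_rfl le_top (A.bracket_mem_bracketSub hu hu')
    exact le_antisymm le_top (ih.symm.trans_le (sup_le le_sup_left step))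

/-- Right-normed bracket sequence generated by `x`: `x, [x,x], [[x,x],x], ...` -/
def genSeq (A : LeibnizAlgebra F L) (x : L) : ℕ → L
  | 0 => x
  | k + 1 => A.bracket (A.genSeq x k) x

/-- Span of the tail of the generating sequence. -/
def genSpan (A : LeibnizAlgebra F L) (x : L) (k : ℕ) : Submodule F L :=
  Submodule.span F (A.genSeq x '' {j | k ≤ j})

variable (x : L)

lemma genSeq_mem_genSpan {k j : ℕ} (h : k ≤ j) : A.genSeq x j ∈ A.genSpan x k :=
  Submodule.subset_span ⟨j, h, rfl⟩

lemma genSpan_antitone {k m : ℕ} (h : k ≤ m) : A.genSpan x m ≤ A.genSpan x k := by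
  apply Submodule.span_le.mpr
  rintro z ⟨j, hj, rfl⟩
  exact A.genSeq_mem_genSpan x (h.trans hj)

lemma genSpan_bracket_right {k : ℕ} {y : L} (hy : y ∈ A.genSpan x k) :
    A.bracket y x ∈ A.genSpan x (k + 1) := by
  have : A.genSpan x k ≤ Submodule.comap (A.bracket.flip x) (A.genSpan x (k + 1)) := by
    apply Submodule.span_le.mpr
    rintro z ⟨j, hj, rfl⟩
    exact A.genSeq_mem_genSpan x (Nat.succ_le_succ hj)
  exact this hy

lemma genSeq_bracket : ∀ j i : ℕ,
    A.bracket (A.genSeq x i) (A.genSeq x j) ∈ A.genSpan x (i + j + 1) := by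
  intro j
  induction j with
  | zero => intro i; exact A.genSeq_mem_genSpan x (le_refl (i + 1))
  | succ j ih =>
    intro i
    show A.bracket (A.genSeq x i) (A.bracket (A.genSeq x j) x) ∈ _
    rw [A.leibniz]
    apply sub_mem
    · have h1 := ih i
      have := A.genSpan_bracket_right x h1
      exact A.genSpan_antitone x (by omega) this
    · have h2 := ih (i + 1)
      show A.bracket (A.genSeq x (i + 1)) (A.genSeq x j) ∈ _
      exact A.genSpan_antitone x (by omega) h2

lemma genSpan_bracket {i j : ℕ} {a b : L} (ha : a ∈ A.genSpan x i) (hb : b ∈ A.genSpan x j) :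
    A.bracket a b ∈ A.genSpan x (i + j + 1) := by
  have key : A.genSpan x i ≤
      Submodule.comap (A.bracket.flip b) (A.genSpan x (i + j + 1)) := by
    apply Submodule.span_le.mpr
    rintro z ⟨p, hp, rfl⟩
    have inner : A.genSpan x j ≤
        Submodule.comap (A.bracket (A.genSeq x p)) (A.genSpan x (i + j + 1)) := by
      apply Submodule.span_le.mpr
      rintro w ⟨q, hq, rfl⟩
      exact A.genSpan_antitone x (Nat.succ_le_succ (Nat.add_le_add hp hq)) (A.genSeq_bracket x q p)
    exact inner hb
  exact key ha

lemma genSeq_mem_lcsPow (j : ℕ) : A.genSeq x j ∈ A.lcsPow ⊤ j := by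
  induction j with
  | zero => exact Submodule.mem_top
  | succ j ih => exact A.bracket_mem_bracketSub ih Submodule.mem_top

lemma genSpan_le_lcsPow (k : ℕ) : A.genSpan x k ≤ A.lcsPow ⊤ k := by
  apply Submodule.span_le.mpr
  rintro z ⟨j, hj, rfl⟩
  exact A.lcsPow_antitone hj (A.genSeq_mem_lcsPow x j)

lemma lcsPow_eq_genSpan (htop : A.genSpan x 0 = ⊤) (k : ℕ) :
    A.lcsPow ⊤ k = A.genSpan x k := by
  induction k with
  | zero => exact htop.symm
  | succ k ih =>
    apply le_antisymm
    · show A.bracketSub (A.lcsPow ⊤ k) ⊤ ≤ _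
      apply A.bracketSub_le
      intro a ha b _
      have ha' : a ∈ A.genSpan x k := ih.le ha
      have hb' : b ∈ A.genSpan x 0 := htop.ge Submodule.mem_top
      exact A.genSpan_bracket (i := k) (j := 0) x ha' hb'
    · exact A.genSpan_le_lcsPow x (k + 1)

lemma genSpan_le_sup (k : ℕ) :
    A.genSpan x k ≤ A.genSpan x (k + 1) ⊔ Submodule.span F {A.genSeq x k} := by
  apply Submodule.span_le.mpr
  rintro z ⟨j, hj, rfl⟩
  rcases Nat.lt_or_ge k j with h | h
  · exact Submodule.mem_sup_left (A.genSeq_mem_genSpan x h)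
  · have : j = k := le_antisymm h hj
    subst this
    exact Submodule.mem_sup_right (Submodule.mem_span_singleton_self _)

/-- In a nilpotent Leibniz algebra, if `lcsPow` stabilizes at `k` it is trivial. -/
lemma lcsPow_eq_bot_of_stab {m k : ℕ} (hnil : A.lcsPow ⊤ m = ⊥)
    (hstab : A.lcsPow ⊤ (k + 1) = A.lcsPow ⊤ k) : A.lcsPow ⊤ k = ⊥ := by
  have hall : ∀ j : ℕ, A.lcsPow ⊤ (k + j) = A.lcsPow ⊤ k := by
    intro j
    induction j with
    | zero => rfl
    | succ j ih =>
      show A.bracketSub (A.lcsPow ⊤ (k + j)) ⊤ = _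
      rw [ih]
      exact hstab
  have := hall m
  rw [← this]
  exact le_bot_iff.mp ((A.lcsPow_antitone (Nat.le_add_left m k)).trans hnil.le)

end LeibnizAlgebra

open LeibnizAlgebra in
/-- A finite-dimensional nilpotent Leibniz algebra is null-filiform
(`dim L^i = n + 1 - i` for `1 ≤ i ≤ n + 1`, where `n = dim L` and `A.lcsPow ⊤ (i-1) = L^i`)
if and only if it is generated by a single element. -/
theorem nullFiliform_iff_oneGenerated
    {L : Type*} [AddCommGroup L] [Module ℂ L] [FiniteDimensional ℂ L]
    (A : LeibnizAlgebra ℂ L) (hnil : ∃ m : ℕ, A.lcsPow ⊤ m = ⊥) :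
    (∀ i : ℕ, 1 ≤ i → i ≤ Module.finrank ℂ L + 1 →
        Module.finrank ℂ ↥(A.lcsPow ⊤ (i - 1)) = Module.finrank ℂ L + 1 - i) ↔
      (∃ x : L, ∀ S : Submodule ℂ L, x ∈ S →
        (∀ a b : L, a ∈ S → b ∈ S → A.bracket a b ∈ S) → S = ⊤) := by
  obtain ⟨m, hm⟩ := hnil
  set n := Module.finrank ℂ L with hn
  constructor
  · intro h
    rcases Nat.eq_zero_or_pos n with hn0 | hn1
    · -- trivial algebra: generated by 0
      refine ⟨0, fun S _ _ => ?_⟩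
      have : Module.finrank ℂ (⊤ : Submodule ℂ L) = 0 := by
        rw [finrank_top]; exact hn0
      have hbot : (⊤ : Submodule ℂ L) = ⊥ :=
        Submodule.finrank_eq_zero.mp this
      apply le_antisymm le_top
      rw [hbot]
      exact bot_le
    · -- pick x outside L²
      have h2 : Module.finrank ℂ ↥(A.lcsPow ⊤ 1) = n - 1 := by
        have := h 2 (by omega) (by omega)
        simpa using this
      have hlt : A.lcsPow ⊤ 1 < ⊤ := by
        rw [lt_top_iff_ne_top]
        intro h'
        rw [h', finrank_top] at h2
        omega
      obtain ⟨x, -, hx⟩ := SetLike.exists_of_lt hlt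
      refine ⟨x, fun S hxS hSclosed => ?_⟩
      -- span x ⊔ L² = ⊤ by dimension count
      have hsup : Submodule.span ℂ {x} ⊔ A.lcsPow ⊤ 1 = ⊤ := by
        apply Submodule.eq_top_of_finrank_eq
        have hlt2 : A.lcsPow ⊤ 1 < Submodule.span ℂ {x} ⊔ A.lcsPow ⊤ 1 := by
          apply lt_of_le_of_ne le_sup_right
          intro heq
          apply hx
          rw [heq]
          exact Submodule.mem_sup_left (Submodule.mem_span_singleton_self x)
        have h3 := Submodule.finrank_lt_finrank_of_lt hlt2
        have h4 : Module.finrank ℂ ↥(Submodule.span ℂ {x} ⊔ A.lcsPow ⊤ 1) ≤ n := by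
          rw [hn]
          exact Submodule.finrank_le _
        rw [h2] at h3
        omega
      have hS1 : S ⊔ A.lcsPow ⊤ 1 = ⊤ := by
        refine le_antisymm le_top (hsup.ge.trans (sup_le ?_ le_sup_right))
        exact Submodule.span_le.mpr
          (Set.singleton_subset_iff.mpr (Submodule.mem_sup_left hxS))
      have hall := A.subalg_sup_lcsPow S hSclosed hS1
      have := hall m
      have hbotm : A.lcsPow ⊤ (m + 1) = ⊥ :=
        le_bot_iff.mp ((A.lcsPow_succ_le m).trans hm.le)
      rw [hbotm, sup_bot_eq] at this
      exact this
  · rintro ⟨x, hx⟩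
    -- the span of the generating sequence is a subalgebra containing x
    have hclosed : ∀ a b : L, a ∈ A.genSpan x 0 → b ∈ A.genSpan x 0 →
        A.bracket a b ∈ A.genSpan x 0 := by
      intro a b ha hb
      have := A.genSpan_bracket x ha hb
      exact A.genSpan_antitone x (by omega) this
    have htop : A.genSpan x 0 = ⊤ :=
      hx _ (A.genSeq_mem_genSpan x le_rfl) hclosed
    have heq := A.lcsPow_eq_genSpan x htop
    -- dimension drop ≤ 1 at every step
    have hdrop : ∀ k : ℕ, Module.finrank ℂ ↥(A.lcsPow ⊤ k) ≤
        Module.finrank ℂ ↥(A.lcsPow ⊤ (k + 1)) + 1 := by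
      intro k
      have hle : A.lcsPow ⊤ k ≤ A.lcsPow ⊤ (k + 1) ⊔ Submodule.span ℂ {A.genSeq x k} := by
        rw [heq k, heq (k + 1)]
        exact A.genSpan_le_sup x k
      calc Module.finrank ℂ ↥(A.lcsPow ⊤ k)
          ≤ Module.finrank ℂ ↥(A.lcsPow ⊤ (k + 1) ⊔ Submodule.span ℂ {A.genSeq x k}) :=
            Submodule.finrank_mono hle
        _ ≤ Module.finrank ℂ ↥(A.lcsPow ⊤ (k + 1)) +
              Module.finrank ℂ ↥(Submodule.span ℂ {A.genSeq x k}) :=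
            Submodule.finrank_add_le_finrank_add_finrank _ _
        _ ≤ Module.finrank ℂ ↥(A.lcsPow ⊤ (k + 1)) + 1 := by
            gcongr
            by_cases hz : A.genSeq x k = 0
            · rw [hz, Submodule.span_zero_singleton, finrank_bot]
              omega
            · exact le_of_eq (finrank_span_singleton hz)
    -- strict drop until ⊥
    have hstrict : ∀ k : ℕ, A.lcsPow ⊤ k ≠ ⊥ →
        Module.finrank ℂ ↥(A.lcsPow ⊤ (k + 1)) < Module.finrank ℂ ↥(A.lcsPow ⊤ k) := by
      intro k hk
      apply Submodule.finrank_lt_finrank_of_lt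
      apply lt_of_le_of_ne (A.lcsPow_succ_le k)
      intro heq'
      exact hk (A.lcsPow_eq_bot_of_stab hm heq')
    -- main induction: finrank (lcsPow j) = n - j for j ≤ n
    have main : ∀ j : ℕ, j ≤ n → Module.finrank ℂ ↥(A.lcsPow ⊤ j) = n - j := by
      intro j
      induction j with
      | zero =>
        intro _
        show Module.finrank ℂ (⊤ : Submodule ℂ L) = n - 0
        rw [finrank_top, Nat.sub_zero, hn]
      | succ j ih =>
        intro hjn
        have hj := ih (by omega)
        have hne : A.lcsPow ⊤ j ≠ ⊥ := by
          intro hb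
          rw [hb] at hj
          simp only [finrank_bot] at hj
          omega
        have h1 := hstrict j hne
        have h2 := hdrop j
        omega
    intro i hi1 hi2
    have := main (i - 1) (by omega)
    rw [this]
    omega
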